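/- arXiv:math/0607211 — 3 statements merged into one kernel-verified Lean document; each statement's English description precedes it below -/
import Mathlib

section
/- For any finite sequence (word) in letters {1,2} with the Yamanouchi property and equal numbers of 1's and 2's, there exists exactly one perfect matching between positions labeled 1 and positions labeled 2 such that each 1 is matched to a later 2 and no two matched pairs nest (i.e., there are no matched pairs (a,b), (c,d) with a < c < d < b); this matching pairs the i-th 1 (in increasing position order) with the i-th 2. -/
/-!
Any matching in which every 1 precedes its partner and no two pairs nest is strictly
order-preserving, and an order isomorphism between finite linear orders is unique, so there is
at most one such matching: the one sending the `i`-th 1 to the `i`-th 2. It exists because the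
ballot condition, read at the position of the `i`-th 2, says that at least `i + 1` letters 1
occur up to that position, so the `i`-th 1 comes strictly earlier.
-/

open Finset

section

variable {α : Type*} [LinearOrder α] {p q : α → Prop}

def IsNonnestingMatching (f : {x // p x} ≃ {x // q x}) : Prop :=
  (∀ a, a.1 < (f a).1) ∧
    ¬ ∃ a c : {x // p x}, a.1 < c.1 ∧ c.1 < (f c).1 ∧ (f c).1 < (f a).1

theorem isNonnestingMatching_iff {f : {x // p x} ≃ {x // q x}} :
    IsNonnestingMatching f ↔ (∀ a, a.1 < (f a).1) ∧ StrictMono f := by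
  refine ⟨fun ⟨hlt, hnest⟩ => ⟨hlt, fun a c hac => ?_⟩, fun ⟨hlt, hmono⟩ => ⟨hlt, ?_⟩⟩
  · refine lt_of_le_of_ne (not_lt.1 fun hca => hnest ⟨a, c, hac, hlt c, hca⟩) ?_
    exact f.injective.ne hac.ne
  · rintro ⟨a, c, hac, -, hca⟩
    exact (hmono hac).not_gt hca

theorem Equiv.eq_of_strictMono {β : Type*} [WellFoundedLT α] [Preorder β] {f g : α ≃ β}
    (hf : StrictMono f) (hg : StrictMono g) : f = g :=
  congrArg RelIso.toEquiv
    (Subsingleton.elim (⟨f, hf.le_iff_le⟩ : α ≃o β) ⟨g, hg.le_iff_le⟩)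

variable [Fintype α] [DecidablePred p] [DecidablePred q]

theorem OrderIso.val_apply_le_iff_lt_card {n : ℕ} (e : Fin n ≃o {x // p x}) (i : Fin n)
    (k : α) : (e i).1 ≤ k ↔ i.1 < #{x | x ≤ k ∧ p x} := by
  have hcard : #{x | x ≤ k ∧ p x} = #{j : Fin n | (e j).1 ≤ k} := by
    refine (card_bij (fun j _ => (e j).1) (fun j hj => ?_) (fun j _ j' _ h => ?_)
      (fun x hx => ?_)).symm
    · exact mem_filter.2 ⟨mem_univ _, (mem_filter.1 hj).2, (e j).2⟩
    · exact e.injective (Subtype.ext h)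
    · obtain ⟨hxk, hx⟩ := (mem_filter.1 hx).2
      exact ⟨e.symm ⟨x, hx⟩, by simpa using hxk, by simp⟩
  rw [hcard]
  constructor
  · intro hik
    calc i.1 < #(Iic i) := by simp
      _ ≤ _ := card_le_card fun j hj =>
        mem_filter.2 ⟨mem_univ _, (Subtype.coe_le_coe.2 (e.monotone (mem_Iic.1 hj))).trans hik⟩
  · intro hi
    by_contra! hki
    have hsub : #{j : Fin n | (e j).1 ≤ k} ≤ #(Iio i) := card_le_card fun j hj =>
      mem_Iio.2 (e.lt_iff_lt.1 (Subtype.coe_lt_coe.1 ((mem_filter.1 hj).2.trans_lt hki)))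
    simp only [Fin.card_Iio] at hsub
    omega

theorem exists_orderIso_lt_of_ballot (hpq : ∀ x, p x → ¬ q x)
    (hballot : ∀ k, #{x | x ≤ k ∧ q x} ≤ #{x | x ≤ k ∧ p x})
    (hcard : Fintype.card {x // p x} = Fintype.card {x // q x}) :
    ∃ f : {x // p x} ≃o {x // q x}, ∀ a, a.1 < (f a).1 := by
  let eP := Fintype.orderIsoFinOfCardEq {x // p x} hcard
  let eQ := Fintype.orderIsoFinOfCardEq {x // q x} rfl
  refine ⟨eP.symm.trans eQ, fun a => ?_⟩
  obtain ⟨i, rfl⟩ := eP.surjective a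
  rw [OrderIso.trans_apply, OrderIso.symm_apply_apply]
  have hle : (eP i).1 ≤ (eQ i).1 := by
    rw [eP.val_apply_le_iff_lt_card]
    exact ((eQ.val_apply_le_iff_lt_card i _).1 le_rfl).trans_le (hballot _)
  exact hle.lt_of_ne fun h => hpq _ (eP i).2 (h ▸ (eQ i).2)

end

/-- For any Yamanouchi word in letters {1,2} (encoded as `Fin 2`,
with `0` playing the role of the letter 1 and `1` the role of the letter 2)
with equal numbers of both letters, there is exactly one matching between
positions labeled 1 and positions labeled 2 such that each 1 is matched to a
later 2 and no two matched pairs nest; moreover any such matching pairs the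
i-th 1 (in increasing position order) with the i-th 2, i.e. it is strictly
order-preserving. -/
theorem unique_nonnesting_matching (n : ℕ) (w : Fin (2 * n) → Fin 2)
    (hYam : ∀ k : Fin (2 * n),
      (Finset.univ.filter fun i => i ≤ k ∧ w i = 1).card ≤
        (Finset.univ.filter fun i => i ≤ k ∧ w i = 0).card)
    (hcount0 : (Finset.univ.filter fun i => w i = 0).card = n)
    (hcount1 : (Finset.univ.filter fun i => w i = 1).card = n) :
    (∃! f : {i : Fin (2 * n) // w i = 0} ≃ {i : Fin (2 * n) // w i = 1},
      (∀ a, a.1 < (f a).1) ∧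
      ¬ ∃ a c : {i : Fin (2 * n) // w i = 0},
          a.1 < c.1 ∧ c.1 < (f c).1 ∧ (f c).1 < (f a).1) ∧
    (∀ f : {i : Fin (2 * n) // w i = 0} ≃ {i : Fin (2 * n) // w i = 1},
      ((∀ a, a.1 < (f a).1) ∧
        ¬ ∃ a c : {i : Fin (2 * n) // w i = 0},
            a.1 < c.1 ∧ c.1 < (f c).1 ∧ (f c).1 < (f a).1) →
      ∀ a c : {i : Fin (2 * n) // w i = 0}, a.1 < c.1 → (f a).1 < (f c).1) := by
  have hdisj : ∀ i, w i = 0 → ¬ w i = 1 := fun i h0 h1 => absurd (h0.symm.trans h1) (by decide)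
  have hcard : Fintype.card {i // w i = 0} = Fintype.card {i // w i = 1} := by
    rw [Fintype.card_subtype, Fintype.card_subtype, hcount0, hcount1]
  obtain ⟨f, hf⟩ := exists_orderIso_lt_of_ballot hdisj hYam hcard
  have hmono (g : {i // w i = 0} ≃ {i // w i = 1}) (hg : IsNonnestingMatching g) :
      StrictMono g := (isNonnestingMatching_iff.1 hg).2
  refine ⟨⟨f.toEquiv, isNonnestingMatching_iff.2 ⟨hf, f.strictMono⟩, fun g hg => ?_⟩,
    fun g hg _ _ => @hmono g hg _ _⟩
  exact Equiv.eq_of_strictMono (hmono g hg) f.strictMono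
end

section
/- Let X be a 2 × n matrix over an infinite field with all 2×2 minors P_{ij} (i < j). Define a monomial in Plücker coordinates P_{J^1} ⋯ P_{J^h} (each J^k = (j^k_1 < j^k_2)) to be non-crossing if there are no two indices p, q with j^p_1 < j^q_1 < j^p_2 < j^q_2. Then every monomial in the Plücker coordinates of X equals a linear combination of non-crossing monomials of the same multidegree, as polynomial functions of the entries of X. -/
open MvPolynomial

/-- The Plücker coordinate `P_{j₁ j₂}` of a generic 2 × n matrix, as a
polynomial in the entries (variables indexed by `Fin 2 × Fin n`). -/
noncomputable def pluckerCoord (F : Type*) [Field F] (n : ℕ) (j : Fin n × Fin n) :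
    MvPolynomial (Fin 2 × Fin n) F :=
  X (0, j.1) * X (1, j.2) - X (0, j.2) * X (1, j.1)

/-- The monomial in Plücker coordinates indexed by a list of column pairs. -/
noncomputable def pluckerMonomial (F : Type*) [Field F] (n : ℕ)
    (L : List (Fin n × Fin n)) : MvPolynomial (Fin 2 × Fin n) F :=
  (L.map (pluckerCoord F n)).prod

/-- The multiset of column indices used by a monomial in Plücker coordinates
(its multidegree/content). -/
def pluckerCols {n : ℕ} (L : List (Fin n × Fin n)) : Multiset (Fin n) :=
  (L.map fun j => ({j.1, j.2} : Multiset (Fin n))).sum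

/-- A monomial `P_{J^1} ⋯ P_{J^h}` is non-crossing if no two of its index
pairs cross, i.e. there are no `p q` with `j^p_1 < j^q_1 < j^p_2 < j^q_2`. -/
def pluckerNonCrossing {n : ℕ} (L : List (Fin n × Fin n)) : Prop :=
  ∀ p ∈ L, ∀ q ∈ L, ¬ (p.1 < q.1 ∧ q.1 < p.2 ∧ p.2 < q.2)


/-! Monomials are straightened by the three-term Plücker relation
`P_{ac} P_{bd} = P_{ab} P_{cd} + P_{ad} P_{bc}` for `a < b < c < d`: both products on the right
have the same content as the left one, and each has strictly fewer crossing pairs, because every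
further pair crosses at most as many of `(a, b), (c, d)` (or of `(a, d), (b, c)`) as of
`(a, c), (b, d)`. Induction on the number of crossing pairs concludes. -/

theorem exists_list_of_mem_span_image {R M ι : Type*} [Semiring R] [AddCommMonoid M]
    [Module R M] {v : ι → M} {s : Set ι} {x : M} (hx : x ∈ Submodule.span R (v '' s)) :
    ∃ ks : List (R × ι), x = (ks.map fun p => p.1 • v p.2).sum ∧ ∀ p ∈ ks, p.2 ∈ s := by
  classical
  obtain ⟨l, hls, rfl⟩ := (Finsupp.mem_span_image_iff_linearCombination R).mp hx
  refine ⟨l.support.toList.map fun i => (l i, i), ?_, ?_⟩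
  · rw [List.map_map, Finset.sum_map_toList, Finsupp.linearCombination_apply, Finsupp.sum]
    rfl
  · simp only [List.mem_map, Finset.mem_toList, forall_exists_index, and_imp]
    rintro _ i hi rfl
    exact hls hi

section Plucker

variable {F : Type*} [Field F] {n : ℕ}

variable (F n) in
theorem pluckerCoord_mul_pluckerCoord (a b c d : Fin n) :
    pluckerCoord F n (a, c) * pluckerCoord F n (b, d) =
      pluckerCoord F n (a, b) * pluckerCoord F n (c, d) +
        pluckerCoord F n (a, d) * pluckerCoord F n (b, c) := by
  simp only [pluckerCoord]
  ring

variable (F n) in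
theorem pluckerMonomial_cons (p : Fin n × Fin n) (L : List (Fin n × Fin n)) :
    pluckerMonomial F n (p :: L) = pluckerCoord F n p * pluckerMonomial F n L := by
  simp [pluckerMonomial]

theorem pluckerCols_cons (a b : Fin n) (L : List (Fin n × Fin n)) :
    pluckerCols ((a, b) :: L) = a ::ₘ b ::ₘ pluckerCols L := by
  simp [pluckerCols, Multiset.insert_eq_cons, Multiset.cons_add, Multiset.singleton_add]

variable (F n) in
theorem pluckerMonomial_straighten (a b c d : Fin n) (T : List (Fin n × Fin n)) :
    pluckerMonomial F n ((a, c) :: (b, d) :: T) =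
      pluckerMonomial F n ((a, b) :: (c, d) :: T) + pluckerMonomial F n ((a, d) :: (b, c) :: T) := by
  simp only [pluckerMonomial_cons]
  linear_combination pluckerMonomial F n T * pluckerCoord_mul_pluckerCoord F n a b c d

theorem pluckerCols_straighten_left (a b c d : Fin n) (T : List (Fin n × Fin n)) :
    pluckerCols ((a, b) :: (c, d) :: T) = pluckerCols ((a, c) :: (b, d) :: T) := by
  simp only [pluckerCols_cons, Multiset.cons_swap b c]

theorem pluckerCols_straighten_right (a b c d : Fin n) (T : List (Fin n × Fin n)) :
    pluckerCols ((a, d) :: (b, c) :: T) = pluckerCols ((a, c) :: (b, d) :: T) := by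
  simp only [pluckerCols_cons, Multiset.cons_swap d b, Multiset.cons_swap d c,
    Multiset.cons_swap b c]

theorem List.Perm.pluckerMonomial_eq {L L' : List (Fin n × Fin n)} (h : L.Perm L') :
    pluckerMonomial F n L = pluckerMonomial F n L' :=
  (h.map _).prod_eq

theorem List.Perm.pluckerCols_eq {L L' : List (Fin n × Fin n)} (h : L.Perm L') :
    pluckerCols L = pluckerCols L' :=
  (h.map _).sum_eq

def PairCrosses (p q : Fin n × Fin n) : Prop :=
  p.1 < q.1 ∧ q.1 < p.2 ∧ p.2 < q.2

instance : DecidableRel (PairCrosses (n := n)) :=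
  fun _ _ => inferInstanceAs (Decidable (_ ∧ _ ∧ _))

def interlaced (p q : Fin n × Fin n) : ℕ :=
  if PairCrosses p q ∨ PairCrosses q p then 1 else 0

theorem interlaced_comm (p q : Fin n × Fin n) : interlaced p q = interlaced q p := by
  simp only [interlaced, or_comm]

def crossingNumber : List (Fin n × Fin n) → ℕ
  | [] => 0
  | p :: L => (L.map (interlaced p)).sum + crossingNumber L

theorem List.Perm.crossingNumber_eq {L L' : List (Fin n × Fin n)} (h : L.Perm L') :
    crossingNumber L = crossingNumber L' := by
  induction h with
  | nil => rfl
  | cons p _ ih => simp only [crossingNumber, ih, (‹List.Perm _ _›.map _).sum_eq]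
  | swap p q L =>
    simp only [crossingNumber, List.map_cons, List.sum_cons, interlaced_comm p q]
    ring
  | trans _ _ ih₁ ih₂ => exact ih₁.trans ih₂

theorem exists_perm_of_not_pluckerNonCrossing {L : List (Fin n × Fin n)}
    (h : ¬ pluckerNonCrossing L) :
    ∃ a b c d T, L.Perm ((a, c) :: (b, d) :: T) ∧ a < b ∧ b < c ∧ c < d := by
  simp only [pluckerNonCrossing, not_forall, not_not] at h
  obtain ⟨⟨a, c⟩, hp, ⟨b, d⟩, hq, hab, hbc, hcd⟩ := h
  have hne : ((b, d) : Fin n × Fin n) ≠ (a, c) := fun h => hab.ne' (Prod.ext_iff.mp h).1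
  refine ⟨a, b, c, d, (L.erase (a, c)).erase (b, d), ?_, hab, hbc, hcd⟩
  exact (List.perm_cons_erase hp).trans
    (.cons _ (List.perm_cons_erase ((List.mem_erase_of_ne hne).mpr hq)))

theorem crossingNumber_lt_of_interlaced_le {p q p' q' : Fin n × Fin n}
    (hpq : interlaced p' q' < interlaced p q)
    (hle : ∀ t, interlaced p' t + interlaced q' t ≤ interlaced p t + interlaced q t)
    (T : List (Fin n × Fin n)) :
    crossingNumber (p' :: q' :: T) < crossingNumber (p :: q :: T) := by
  have hT : (T.map fun t => interlaced p' t + interlaced q' t).sum ≤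
      (T.map fun t => interlaced p t + interlaced q t).sum :=
    List.sum_le_sum fun t _ => hle t
  simp only [crossingNumber, List.map_cons, List.sum_cons, List.sum_map_add] at hT ⊢
  omega

theorem crossingNumber_straighten_left {a b c d : Fin n} (hab : a < b) (hbc : b < c)
    (hcd : c < d) (T : List (Fin n × Fin n)) :
    crossingNumber ((a, b) :: (c, d) :: T) < crossingNumber ((a, c) :: (b, d) :: T) := by
  refine crossingNumber_lt_of_interlaced_le ?_ (fun _ => ?_) T <;>
    simp only [interlaced] <;> split_ifs <;> simp only [PairCrosses] at * <;> omega

theorem crossingNumber_straighten_right {a b c d : Fin n} (hab : a < b) (hbc : b < c)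
    (hcd : c < d) (T : List (Fin n × Fin n)) :
    crossingNumber ((a, d) :: (b, c) :: T) < crossingNumber ((a, c) :: (b, d) :: T) := by
  refine crossingNumber_lt_of_interlaced_le ?_ (fun _ => ?_) T <;>
    simp only [interlaced] <;> split_ifs <;> simp only [PairCrosses] at * <;> omega

variable (F n) in
noncomputable def nonCrossingSpan (C : Multiset (Fin n)) :
    Submodule F (MvPolynomial (Fin 2 × Fin n) F) :=
  Submodule.span F (pluckerMonomial F n ''
    {L | (∀ j ∈ L, j.1 < j.2) ∧ pluckerNonCrossing L ∧ pluckerCols L = C})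

theorem pluckerMonomial_mem_nonCrossingSpan (L : List (Fin n × Fin n))
    (hL : ∀ j ∈ L, j.1 < j.2) : pluckerMonomial F n L ∈ nonCrossingSpan F n (pluckerCols L) := by
  induction hN : crossingNumber L using Nat.strong_induction_on generalizing L with
  | _ N ih =>
  by_cases hnc : pluckerNonCrossing L
  · exact Submodule.subset_span ⟨L, ⟨hL, hnc, rfl⟩, rfl⟩
  obtain ⟨a, b, c, d, T, hperm, hab, hbc, hcd⟩ := exists_perm_of_not_pluckerNonCrossing hnc
  have hT : ∀ j ∈ T, j.1 < j.2 := fun j hj => hL j (hperm.symm.subset (by simp [hj]))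
  have hincr : ∀ {p q : Fin n × Fin n}, p.1 < p.2 → q.1 < q.2 → ∀ j ∈ p :: q :: T, j.1 < j.2 := by
    rintro p q hp hq j (_ | ⟨_, _ | ⟨_, hj⟩⟩)
    exacts [hp, hq, hT j hj]
  rw [← hN, hperm.crossingNumber_eq] at ih
  rw [hperm.pluckerMonomial_eq, hperm.pluckerCols_eq, pluckerMonomial_straighten]
  refine add_mem ?_ ?_
  · exact pluckerCols_straighten_left a b c d T ▸
      ih _ (crossingNumber_straighten_left hab hbc hcd T) _ (hincr hab hcd) rfl
  · exact pluckerCols_straighten_right a b c d T ▸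
      ih _ (crossingNumber_straighten_right hab hbc hcd T) _
        (hincr (hab.trans (hbc.trans hcd)) hbc) rfl

end Plucker

theorem pluckerMonomial_eq_sum_noncrossing_general (F : Type*) [Field F]
    (n : ℕ) (L : List (Fin n × Fin n)) (hL : ∀ j ∈ L, j.1 < j.2) :
    ∃ ks : List (F × List (Fin n × Fin n)),
      pluckerMonomial F n L = (ks.map fun p => p.1 • pluckerMonomial F n p.2).sum ∧
      ∀ p ∈ ks, (∀ j ∈ p.2, j.1 < j.2) ∧ pluckerNonCrossing p.2 ∧
        pluckerCols p.2 = pluckerCols L :=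
  exists_list_of_mem_span_image (pluckerMonomial_mem_nonCrossingSpan L hL)

/-- every monomial in the Plücker coordinates of a generic
2 × n matrix over an infinite field is a linear combination of non-crossing
monomials of the same multidegree. -/
theorem pluckerMonomial_eq_sum_noncrossing (F : Type*) [Field F] [Infinite F]
    (n : ℕ) (L : List (Fin n × Fin n)) (hL : ∀ j ∈ L, j.1 < j.2) :
    ∃ ks : List (F × List (Fin n × Fin n)),
      pluckerMonomial F n L = (ks.map fun p => p.1 • pluckerMonomial F n p.2).sum ∧
      ∀ p ∈ ks, (∀ j ∈ p.2, j.1 < j.2) ∧ pluckerNonCrossing p.2 ∧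
        pluckerCols p.2 = pluckerCols L :=
  pluckerMonomial_eq_sum_noncrossing_general F n L hL
end

section
/- In the polynomial ring generated by Plücker coordinates P_{ij} (1 ≤ i < j ≤ n) of the Grassmannian G(2,n), if a monomial M contains a crossing pair P_{ik} P_{jl} with i < j < k < l, then M lies in the ideal generated by the crossing products P_{ik} P_{jl} plus the Plücker ideal; equivalently, modulo the single Plücker relation P_{ik}P_{jl} − P_{ij}P_{kl} − P_{il}P_{jk} = 0, M can be rewritten as a combination of monomials each of strictly larger weight, where the weight of P_{ij} is j − i and the weight of a monomial is the product of the weights of its factors. -/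
open MvPolynomial

/-- The monomial in the Plücker variables `P_J` (one polynomial variable per
pair of column indices) indexed by a list of pairs. -/
noncomputable def pMono (n : ℕ) (L : List (Fin n × Fin n)) :
    MvPolynomial (Fin n × Fin n) ℚ :=
  (L.map X).prod

/-- The weight of a monomial: `w(P_{ab}) = b - a`, multiplied over factors. -/
def pWeight {n : ℕ} (L : List (Fin n × Fin n)) : ℕ :=
  (L.map fun p => (p.2 : ℕ) - (p.1 : ℕ)).prod

/- With `a = j - i`, `b = k - j`, `c = l - k`, the crossing weight is `(a + b) * (b + c)`, which
exceeds `a * c` by `b * (a + b + c)` and `(a + b + c) * b` by `a * c`. -/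

theorem disjoint_weight_lt_crossing_weight {i j k l : ℕ} (hij : i ≤ j) (hjk : j < k)
    (hkl : k ≤ l) : (j - i) * (l - k) < (k - i) * (l - j) := by
  rw [show k - i = (j - i) + (k - j) by omega, show l - j = (k - j) + (l - k) by omega]
  have hb : 0 < k - j := by omega
  nlinarith

theorem nested_weight_lt_crossing_weight {i j k l : ℕ} (hij : i < j) (hjk : j ≤ k)
    (hkl : k < l) : (l - i) * (k - j) < (k - i) * (l - j) := by
  rw [show k - i = (j - i) + (k - j) by omega, show l - j = (k - j) + (l - k) by omega,
    show l - i = (j - i) + (k - j) + (l - k) by omega]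
  have ha : 0 < j - i := by omega
  have hc : 0 < l - k := by omega
  nlinarith

theorem pMono_cons_cons {n : ℕ} (p q : Fin n × Fin n) (L : List (Fin n × Fin n)) :
    pMono n (p :: q :: L) = X p * X q * pMono n L := by
  simp [pMono, mul_assoc]

theorem pWeight_cons_cons {n : ℕ} (p q : Fin n × Fin n) (L : List (Fin n × Fin n)) :
    pWeight (p :: q :: L) = ((p.2 : ℕ) - p.1) * ((q.2 : ℕ) - q.1) * pWeight L := by
  simp [pWeight, mul_assoc]

theorem pWeight_pos {n : ℕ} {L : List (Fin n × Fin n)} (hL : ∀ p ∈ L, p.1 < p.2) :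
    0 < pWeight L := by
  refine List.prod_pos fun w hw => ?_
  obtain ⟨p, hp, rfl⟩ := List.mem_map.mp hw
  exact Nat.sub_pos_of_lt (hL p hp)

/-- if a monomial `M` in the Plücker variables contains a
crossing pair `P_{ik} P_{jl}` with `i < j < k < l`, then `M` lies in the ideal
generated by the crossing products, and modulo the single Plücker relation
`P_{ik}P_{jl} − P_{ij}P_{kl} − P_{il}P_{jk} = 0` the monomial `M` is rewritten
as the combination `P_{ij}P_{kl}M' + P_{il}P_{jk}M'` of monomials whose
weights differ strictly from that of `M`: the crossing monomial `M` has
strictly larger weight than each of the two replacement monomials (this is the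
precise weight comparison of the Plücker relation; cf. STATEMENT 10). -/
theorem crossing_monomial_rewriting (n : ℕ) (i j k l : Fin n)
    (hij : i < j) (hjk : j < k) (hkl : k < l)
    (M' : List (Fin n × Fin n)) (hM' : ∀ p ∈ M', p.1 < p.2) :
    pMono n ((i, k) :: (j, l) :: M') ∈
        Ideal.span {f : MvPolynomial (Fin n × Fin n) ℚ |
          ∃ p q : Fin n × Fin n, p.1 < q.1 ∧ q.1 < p.2 ∧ p.2 < q.2 ∧
            f = X p * X q} ∧
    pMono n ((i, k) :: (j, l) :: M') - pMono n ((i, j) :: (k, l) :: M') -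
        pMono n ((i, l) :: (j, k) :: M') ∈
      Ideal.span {X (i, k) * X (j, l) - X (i, j) * X (k, l) -
        X (i, l) * X (j, k)} ∧
    pWeight ((i, j) :: (k, l) :: M') < pWeight ((i, k) :: (j, l) :: M') ∧
    pWeight ((i, l) :: (j, k) :: M') < pWeight ((i, k) :: (j, l) :: M') := by
  simp only [pMono_cons_cons, pWeight_cons_cons]
  have hW := pWeight_pos hM'
  refine ⟨?_, ?_, ?_, ?_⟩
  · exact Ideal.mul_mem_right _ _ (Ideal.subset_span ⟨(i, k), (j, l), hij, hjk, hkl, rfl⟩)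
  · rw [← sub_mul, ← sub_mul]
    exact Ideal.mul_mem_right _ _ (Ideal.subset_span rfl)
  · exact Nat.mul_lt_mul_of_pos_right
      (disjoint_weight_lt_crossing_weight hij.le hjk hkl.le) hW
  · exact Nat.mul_lt_mul_of_pos_right
      (nested_weight_lt_crossing_weight hij hjk.le hkl) hW
end
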